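/- arXiv:1601.02365 — 6 statements merged into one kernel-verified Lean document; each statement's English description precedes it below -/
import Mathlib

section
/- Let m, n ≥ 1. Let A be a real symmetric 2m×2m matrix, C a real symmetric 2n×2n matrix and B a real 2m×2n matrix such that S = [[A, B],[Bᵀ, C]] satisfies S + (i/2)J_{2(m+n)} ≥ 0, and assume that the complex matrices A + (i/2)J_{2m} and C + (i/2)J_{2n} are invertible. Then S is completely extendable with respect to the second system if and only if there exists a real symmetric positive semidefinite 2n×2n matrix θ such that both C + (i/2)J_{2n} − θ and θ − Bᵀ (A + (i/2)J_{2m})⁻¹ B are positive semidefinite complex matrices. -/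
/-!
Write `M = A + (i/2)J`, `N = C + (i/2)J`, and let `θ` be a real symmetric matrix. The
`k`-extension with off-diagonal copy block `θ` is the sum of `[[M, B], [Bᵀ, θ]]` pulled back
along the map collapsing the `k` copies to one, and of `1ₖ ⊗ (N - θ)`. So it is positive
semidefinite as soon as `N - θ ≥ 0` and `[[M, B], [Bᵀ, θ]] ≥ 0`, and by the Schur complement
the latter means `θ ≥ Bᵀ M⁻¹ B`.

Conversely, reversing the order of the copies turns `θₖ` into `θₖᵀ`, so averaging lets one
assume `θₖ` symmetric. Two copies then give `θₖ ≤ N`, compressing the `k` copies to their mean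
gives `[[M, B], [Bᵀ, θₖ + (N - θₖ)/k]] ≥ 0`, and the `2 × 2` minors bound the entries of `θₖ`
uniformly in `k`. A limit point of the `θₖ` is the required `θ`.
-/

open Matrix Complex
open scoped Kronecker ComplexOrder

noncomputable section

/-- The standard symplectic-form matrix `J_{2n}`: the block-diagonal direct sum of `n`
copies of `[[0,1],[-1,0]]`. -/
def Jmat (n : ℕ) : Matrix (Fin (2 * n)) (Fin (2 * n)) ℝ := fun i j =>
  if i.val + 1 = j.val ∧ i.val % 2 = 0 then 1
  else if j.val + 1 = i.val ∧ j.val % 2 = 0 then -1 else 0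

def toC {p q : Type*} (M : Matrix p q ℝ) : Matrix p q ℂ := M.map (fun x => (x : ℂ))

/-- The `k`-extension `S_k(A,B,C,θ)` of the block covariance matrix `[[A,B],[Bᵀ,C]]`:
the `(0,0)`-block is `A`, the blocks coupling the `0`-component to each of the `k` copies
are `B` (with `Bᵀ` below), the diagonal blocks on the copies are `C`, and the block between
copies `a < b` is `θ` (and `θᵀ` between copies `a > b`). -/
def Sext {m n : ℕ} (k : ℕ) (A : Matrix (Fin (2 * m)) (Fin (2 * m)) ℝ)
    (B : Matrix (Fin (2 * m)) (Fin (2 * n)) ℝ)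
    (C θ : Matrix (Fin (2 * n)) (Fin (2 * n)) ℝ) :
    Matrix (Fin (2 * m) ⊕ Fin k × Fin (2 * n)) (Fin (2 * m) ⊕ Fin k × Fin (2 * n)) ℝ :=
  fun x y =>
    match x, y with
    | Sum.inl i, Sum.inl j => A i j
    | Sum.inl i, Sum.inr (_, j) => B i j
    | Sum.inr (_, i), Sum.inl j => B j i
    | Sum.inr (a, i), Sum.inr (b, j) =>
        if a = b then C i j else if a < b then θ i j else θ j i

/-- The symplectic-form matrix `J' = J_{2m} ⊕ (I_k ⊗ J_{2n})` on the index set of `S_k`. -/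
def Jext (m n k : ℕ) :
    Matrix (Fin (2 * m) ⊕ Fin k × Fin (2 * n)) (Fin (2 * m) ⊕ Fin k × Fin (2 * n)) ℝ :=
  Matrix.fromBlocks (Jmat m) 0 0 ((1 : Matrix (Fin k) (Fin k) ℝ) ⊗ₖ Jmat n)

open Filter Topology

namespace Matrix

variable {ι κ : Type*}

lemma PosSemidef.two_mul_abs_re_apply_le {P : Matrix ι ι ℂ} (hP : P.PosSemidef) (x y : ι) :
    2 * |(P x y).re| ≤ (P x x).re + (P y y).re := by
  have key : ∀ s : ℝ, 0 ≤ (P x x).re + 2 * s * (P x y).re + s ^ 2 * (P y y).re := by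
    intro s
    have h := (hP.submatrix ![x, y]).dotProduct_mulVec_nonneg ![1, (s : ℂ)]
    have hyx : (P y x).re = (P x y).re := by
      rw [← hP.1.apply x y, Complex.star_def, Complex.conj_re]
    simp [dotProduct, mulVec, Fin.sum_univ_two, Complex.le_def, hyx] at h
    nlinarith [h.1]
  cases abs_cases (P x y).re <;> linarith [key 1, key (-1)]

variable [Fintype ι] [Fintype κ]

lemma PosSemidef.fromBlocks_zero_zero_zero {Y : Matrix κ κ ℂ} (hY : Y.PosSemidef) :
    (fromBlocks (0 : Matrix ι ι ℂ) 0 0 Y).PosSemidef := by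
  refine .of_dotProduct_mulVec_nonneg (.fromBlocks isHermitian_zero (by simp) hY.1) fun x => ?_
  obtain ⟨u, v, rfl⟩ : ∃ u v, x = Sum.elim u v := ⟨_, _, (Sum.elim_comp_inl_inr x).symm⟩
  simpa [fromBlocks_mulVec, Function.star_sumElim] using hY.dotProduct_mulVec_nonneg v

lemma PosSemidef.sub_of_fromBlocks_self [DecidableEq κ] {N T : Matrix κ κ ℂ}
    (h : (fromBlocks N T T N).PosSemidef) : (N - T).PosSemidef := by
  have hR := h.conjTranspose_mul_mul_same (fromRows (1 : Matrix κ κ ℂ) (-1))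
  rw [conjTranspose_fromRows_eq_fromCols_conjTranspose, fromCols_mul_fromBlocks,
    fromCols_mul_fromRows] at hR
  convert hR.smul (show (0 : ℝ) ≤ 2⁻¹ by norm_num) using 1
  simp only [conjTranspose_one, conjTranspose_neg, one_mul, mul_one, neg_mul, mul_neg]
  module

lemma PosSemidef.of_tendsto {α : Type*} {l : Filter α} [l.NeBot] {P : α → Matrix ι ι ℂ}
    {Q : Matrix ι ι ℂ} (hPQ : Tendsto P l (𝓝 Q)) (hP : ∀ᶠ a in l, (P a).PosSemidef) :
    Q.PosSemidef := by
  have hclosed : IsClosed {A : Matrix ι ι ℂ | A.PosSemidef} := by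
    have : {A : Matrix ι ι ℂ | A.PosSemidef} =
        {A | Aᴴ = A} ∩ ⋂ x : ι → ℂ, {A | 0 ≤ star x ⬝ᵥ A *ᵥ x} := by
      ext A; simp [posSemidef_iff_dotProduct_mulVec, IsHermitian]
    rw [this]
    refine (isClosed_eq continuous_id.matrix_conjTranspose continuous_id).inter
      (isClosed_iInter fun x => isClosed_le continuous_const ?_)
    exact continuous_const.dotProduct (continuous_id.matrix_mulVec continuous_const)
  exact hclosed.mem_of_tendsto hPQ hP

end Matrix

section BlockExtension

variable {ι κ : Type*}

def copiesBlock (k : ℕ) (N T : Matrix κ κ ℂ) : Matrix (Fin k × κ) (Fin k × κ) ℂ :=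
  of fun p q => if p.1 = q.1 then N p.2 q.2 else if p.1 < q.1 then T p.2 q.2 else Tᴴ p.2 q.2

/-- The complex form of `S_k + (i/2)J'`, see `toC_Sext_add_Jext`. -/
def blockExtension (k : ℕ) (M : Matrix ι ι ℂ) (X : Matrix ι κ ℂ) (N T : Matrix κ κ ℂ) :
    Matrix (ι ⊕ Fin k × κ) (ι ⊕ Fin k × κ) ℂ :=
  fromBlocks M (X.submatrix id Prod.snd) (Xᴴ.submatrix Prod.snd id) (copiesBlock k N T)

def copyAverage (k : ℕ) (κ : Type*) [DecidableEq κ] : Matrix (Fin k × κ) κ ℂ :=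
  of fun p j => if p.2 = j then (k : ℂ)⁻¹ else 0

variable {k : ℕ} {M : Matrix ι ι ℂ} {X : Matrix ι κ ℂ} {N T : Matrix κ κ ℂ}

lemma blockExtension_submatrix_rev :
    (blockExtension k M X N T).submatrix (Sum.map id (Prod.map Fin.rev id))
      (Sum.map id (Prod.map Fin.rev id)) = blockExtension k M X N Tᴴ := by
  ext (i | ⟨a, i⟩) (j | ⟨b, j⟩) <;> simp [blockExtension, copiesBlock]
  rcases lt_trichotomy a b with h | rfl | h
  · simp [h.ne, h.not_gt, not_le.mpr h]
  · simp
  · simp [h.ne', h.not_gt, not_le.mpr h]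

lemma blockExtension_eq_of_isHermitian [DecidableEq κ] (hT : T.IsHermitian) :
    blockExtension k M X N T = (fromBlocks M X Xᴴ T).submatrix (Sum.map id Prod.snd)
      (Sum.map id Prod.snd) + fromBlocks 0 0 0 ((1 : Matrix (Fin k) (Fin k) ℂ) ⊗ₖ (N - T)) := by
  have hT' : ∀ i j, starRingEnd ℂ (T j i) = T i j := hT.apply
  ext (i | ⟨a, i⟩) (j | ⟨b, j⟩) <;> simp [blockExtension, copiesBlock, one_apply]
  split_ifs <;> simp [hT']

lemma blockExtension_submatrix_two_copies (hT : T.IsHermitian) {a b : Fin k} (hab : a < b) :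
    (blockExtension k M X N T).submatrix
      (Sum.elim (fun j => Sum.inr (a, j)) (fun j => Sum.inr (b, j)))
      (Sum.elim (fun j => Sum.inr (a, j)) (fun j => Sum.inr (b, j))) = fromBlocks N T T N := by
  have hT' : ∀ i j, starRingEnd ℂ (T j i) = T i j := hT.apply
  ext (i | i) (j | j) <;> simp [blockExtension, copiesBlock, hab.ne, hab.ne', hT']

lemma Matrix.PosSemidef.blockExtension_symmetrize (hE : (blockExtension k M X N T).PosSemidef) :
    (blockExtension k M X N ((2⁻¹ : ℝ) • (T + Tᴴ))).PosSemidef := by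
  have hE' := hE.submatrix (Sum.map id (Prod.map Fin.rev id))
  rw [blockExtension_submatrix_rev] at hE'
  convert (hE.add hE').smul (show (0 : ℝ) ≤ 2⁻¹ by norm_num) using 1
  ext (i | ⟨a, i⟩) (j | ⟨b, j⟩) <;> simp [blockExtension, copiesBlock] <;> (try split_ifs) <;> ring

lemma Matrix.PosSemidef.two_mul_abs_re_le_of_blockExtension
    (hE : (blockExtension k M X N T).PosSemidef) {a b : Fin k} (hab : a < b) (i j : κ) :
    2 * |(T i j).re| ≤ (N i i).re + (N j j).re := by
  simpa [blockExtension, copiesBlock, hab, hab.ne] using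
    hE.two_mul_abs_re_apply_le (Sum.inr (a, i)) (Sum.inr (b, j))

variable [Fintype κ] [DecidableEq κ]

lemma Matrix.PosSemidef.sub_of_blockExtension (hT : T.IsHermitian) {a b : Fin k} (hab : a < b)
    (hE : (blockExtension k M X N T).PosSemidef) : (N - T).PosSemidef := by
  have h := hE.submatrix (Sum.elim (fun j => Sum.inr (a, j)) (fun j => Sum.inr (b, j)))
  rw [blockExtension_submatrix_two_copies hT hab] at h
  exact h.sub_of_fromBlocks_self

lemma submatrix_snd_mul_copyAverage (hk : k ≠ 0) (X : Matrix ι κ ℂ) :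
    X.submatrix id (Prod.snd : Fin k × κ → κ) * copyAverage k κ = X := by
  have hk : (k : ℂ) ≠ 0 := Nat.cast_ne_zero.mpr hk
  ext i j
  simp [copyAverage, mul_apply, Fintype.sum_prod_type, mul_left_comm _ (X i j), hk]

lemma conjTranspose_copyAverage_mul_copiesBlock_mul (hk : k ≠ 0) (hT : T.IsHermitian) :
    (copyAverage k κ)ᴴ * copiesBlock k N T * copyAverage k κ = T + (k : ℝ)⁻¹ • (N - T) := by
  have hT' : ∀ i j, starRingEnd ℂ (T j i) = T i j := hT.apply
  have hcount : ∀ a b : ℂ, ∑ x : Fin k, ∑ y : Fin k, (if y = x then a else b) =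
      k * a + (k ^ 2 - k) * b := by
    intro a b
    simp_rw [show ∀ x y : Fin k, (if y = x then a else b) = b + if y = x then a - b else 0 by
      intros; split_ifs <;> ring]
    simp only [Finset.sum_add_distrib, Finset.sum_const, Finset.card_univ, Fintype.card_fin,
      nsmul_eq_mul, Finset.sum_ite_eq', Finset.mem_univ, if_true]
    ring
  ext i j
  simp [copyAverage, copiesBlock, mul_apply, Fintype.sum_prod_type, hT',
    apply_ite (starRingEnd ℂ), ite_mul, ← Finset.sum_mul, hcount]
  field_simp
  ring

variable [Fintype ι]

theorem posSemidef_blockExtension (hT : T.IsHermitian) (hNT : (N - T).PosSemidef)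
    (hF : (fromBlocks M X Xᴴ T).PosSemidef) : (blockExtension k M X N T).PosSemidef := by
  rw [blockExtension_eq_of_isHermitian hT]
  exact (hF.submatrix _).add (PosSemidef.one.kronecker hNT).fromBlocks_zero_zero_zero

variable [DecidableEq ι] in
lemma Matrix.PosSemidef.fromBlocks_of_blockExtension (hk : k ≠ 0) (hT : T.IsHermitian)
    (hE : (blockExtension k M X N T).PosSemidef) :
    (fromBlocks M X Xᴴ (T + (k : ℝ)⁻¹ • (N - T))).PosSemidef := by
  have h := hE.conjTranspose_mul_mul_same (fromBlocks (1 : Matrix ι ι ℂ) 0 0 (copyAverage k κ))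
  rw [blockExtension, fromBlocks_conjTranspose, fromBlocks_multiply, fromBlocks_multiply] at h
  simpa [← conjTranspose_submatrix, ← conjTranspose_mul, submatrix_snd_mul_copyAverage hk,
    conjTranspose_copyAverage_mul_copiesBlock_mul hk hT] using h

end BlockExtension

section Real

variable {ι κ : Type*}

lemma transpose_toC (B : Matrix ι κ ℝ) : (toC B)ᵀ = (toC B)ᴴ := by
  ext; simp [toC]

lemma toC_symmetrize (θ : Matrix κ κ ℝ) :
    toC ((2⁻¹ : ℝ) • (θ + θᵀ)) = (2⁻¹ : ℝ) • (toC θ + (toC θ)ᴴ) := by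
  ext; simp [toC]

lemma isHermitian_toC_symmetrize (θ : Matrix κ κ ℝ) :
    (toC ((2⁻¹ : ℝ) • (θ + θᵀ))).IsHermitian := by
  ext; simp [toC, add_comm]

lemma continuous_toC : Continuous (toC : Matrix ι κ ℝ → Matrix ι κ ℂ) :=
  continuous_id.matrix_map Complex.continuous_ofReal

lemma Matrix.PosSemidef.of_toC [Fintype κ] {θ : Matrix κ κ ℝ} (h : (toC θ).PosSemidef) :
    θ.PosSemidef := by
  refine .of_dotProduct_mulVec_nonneg ?_ fun x => ?_
  · ext i j
    simpa [toC] using congr_fun₂ h.1 i j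
  · have hx := h.dotProduct_mulVec_nonneg (fun i => (x i : ℂ))
    have : star (fun i => (x i : ℂ)) ⬝ᵥ toC θ *ᵥ (fun i => (x i : ℂ)) =
        ((star x ⬝ᵥ θ *ᵥ x : ℝ) : ℂ) := by
      simp [dotProduct, mulVec, toC]
    rwa [this, Complex.zero_le_real] at hx

end Real

section Limit

lemma Matrix.exists_strictMono_tendsto_of_abs_apply_le {ι κ : Type*} [Countable ι] [Countable κ]
    {σ : ℕ → Matrix ι κ ℝ} (b : ι → κ → ℝ) (hσ : ∀ j i i', |σ j i i'| ≤ b i i') :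
    ∃ L : Matrix ι κ ℝ, ∃ φ : ℕ → ℕ, StrictMono φ ∧ Tendsto (σ ∘ φ) atTop (𝓝 L) := by
  have hbox : ∀ j, (fun i i' => σ j i i') ∈ Set.univ.pi fun i => Set.univ.pi fun i' =>
      Set.Icc (-b i i') (b i i') := fun j => by
    simpa only [Set.mem_pi, Set.mem_univ, true_implies, Set.mem_Icc, ← abs_le] using hσ j
  obtain ⟨L, -, φ, hφ, hL⟩ := (isCompact_univ_pi fun i => isCompact_univ_pi fun i' =>
    isCompact_Icc).tendsto_subseq hbox
  exact ⟨L, φ, hφ, hL⟩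

variable {ι κ : Type*} [Fintype ι] [DecidableEq ι] [Fintype κ] [DecidableEq κ]
  {M : Matrix ι ι ℂ} {X : Matrix ι κ ℂ} {N : Matrix κ κ ℂ}

theorem exists_real_posSemidef_fromBlocks_of_blockExtensions
    (h : ∀ k : ℕ, 1 ≤ k → ∃ θ : Matrix κ κ ℝ, (blockExtension k M X N (toC θ)).PosSemidef) :
    ∃ θ : Matrix κ κ ℝ, (N - toC θ).PosSemidef ∧ (fromBlocks M X Xᴴ (toC θ)).PosSemidef := by
  choose θ hθ using fun j : ℕ => h (j + 2) (by omega)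
  set σ : ℕ → Matrix κ κ ℝ := fun j => (2⁻¹ : ℝ) • (θ j + (θ j)ᵀ)
  have hσ : ∀ j, (blockExtension (j + 2) M X N (toC (σ j))).PosSemidef := fun j => by
    simpa only [σ, toC_symmetrize] using (hθ j).blockExtension_symmetrize
  have h01 : ∀ j, (0 : Fin (j + 2)) < 1 := fun j => by simp
  have hbound : ∀ j i i', |σ j i i'| ≤ ((N i i).re + (N i' i').re) / 2 := fun j i i' => by
    have := (hσ j).two_mul_abs_re_le_of_blockExtension (h01 j) i i'
    simp only [toC, map_apply, Complex.ofReal_re] at this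
    linarith
  obtain ⟨L, φ, hφ, hL⟩ := exists_strictMono_tendsto_of_abs_apply_le _ hbound
  have hk : Tendsto (fun j => ((φ j + 2 : ℕ) : ℝ)⁻¹) atTop (𝓝 0) :=
    tendsto_inv_atTop_zero.comp (tendsto_natCast_atTop_atTop.comp
      ((tendsto_add_atTop_nat 2).comp hφ.tendsto_atTop))
  have hg : Continuous fun p : Matrix κ κ ℝ × ℝ =>
      fromBlocks M X Xᴴ (toC p.1 + p.2 • (N - toC p.1)) := by
    refine continuous_const.matrix_fromBlocks continuous_const continuous_const ?_
    exact (continuous_toC.comp continuous_fst).add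
      (continuous_snd.smul (continuous_const.sub (continuous_toC.comp continuous_fst)))
  refine ⟨L, ?_, ?_⟩
  · refine PosSemidef.of_tendsto (tendsto_const_nhds.sub ((continuous_toC.tendsto L).comp hL))
      (Eventually.of_forall fun j => ?_)
    exact (hσ (φ j)).sub_of_blockExtension (isHermitian_toC_symmetrize _) (h01 _)
  · have := (hg.tendsto (L, 0)).comp (hL.prodMk_nhds hk)
    simp only [zero_smul, add_zero] at this
    refine PosSemidef.of_tendsto this (Eventually.of_forall fun j => ?_)
    exact (hσ (φ j)).fromBlocks_of_blockExtension (by omega) (isHermitian_toC_symmetrize _)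

end Limit

section Gaussian

def addHalfIJ {p : ℕ} (A : Matrix (Fin (2 * p)) (Fin (2 * p)) ℝ) :
    Matrix (Fin (2 * p)) (Fin (2 * p)) ℂ :=
  toC A + (Complex.I / 2) • toC (Jmat p)

variable {m n : ℕ} (A : Matrix (Fin (2 * m)) (Fin (2 * m)) ℝ)
  (B : Matrix (Fin (2 * m)) (Fin (2 * n)) ℝ) (C θ : Matrix (Fin (2 * n)) (Fin (2 * n)) ℝ)

lemma toC_fromBlocks_add_Jmat :
    toC (fromBlocks A B Bᵀ C) + (Complex.I / 2) • toC (fromBlocks (Jmat m) 0 0 (Jmat n)) =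
      fromBlocks (addHalfIJ A) (toC B) (toC B)ᴴ (addHalfIJ C) := by
  ext (i | i) (j | j) <;> simp [addHalfIJ, toC]

lemma toC_Sext_add_Jext (k : ℕ) :
    toC (Sext k A B C θ) + (Complex.I / 2) • toC (Jext m n k) =
      blockExtension k (addHalfIJ A) (toC B) (addHalfIJ C) (toC θ) := by
  ext (i | ⟨a, i⟩) (j | ⟨b, j⟩) <;>
    simp [Sext, Jext, blockExtension, copiesBlock, addHalfIJ, toC, one_apply]
  split_ifs <;> simp

end Gaussian

theorem gaussian_complete_extendability_invertible_iff_general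
    {m n : ℕ}
    (A : Matrix (Fin (2 * m)) (Fin (2 * m)) ℝ)
    (C : Matrix (Fin (2 * n)) (Fin (2 * n)) ℝ)
    (B : Matrix (Fin (2 * m)) (Fin (2 * n)) ℝ)
    (hS : (toC (Matrix.fromBlocks A B Bᵀ C) +
      (Complex.I / 2) • toC (Matrix.fromBlocks (Jmat m) 0 0 (Jmat n))).PosSemidef)
    (hAinv : IsUnit (toC A + (Complex.I / 2) • toC (Jmat m))) :
    (∀ k : ℕ, 1 ≤ k → ∃ θk : Matrix (Fin (2 * n)) (Fin (2 * n)) ℝ,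
        (toC (Sext k A B C θk) + (Complex.I / 2) • toC (Jext m n k)).PosSemidef) ↔
      ∃ θ : Matrix (Fin (2 * n)) (Fin (2 * n)) ℝ, θ.PosSemidef ∧
        (toC C + (Complex.I / 2) • toC (Jmat n) - toC θ).PosSemidef ∧
        (toC θ -
          (toC B)ᵀ * (toC A + (Complex.I / 2) • toC (Jmat m))⁻¹ * toC B).PosSemidef := by
  rw [toC_fromBlocks_add_Jmat] at hS
  have hM : (addHalfIJ A).PosDef :=
    (PosSemidef.posDef_iff_isUnit (hS.submatrix Sum.inl)).mpr hAinv
  have := hM.isUnit.invertible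
  simp_rw [toC_Sext_add_Jext, transpose_toC]
  constructor
  · intro h
    obtain ⟨θ, hCθ, hF⟩ := exists_real_posSemidef_fromBlocks_of_blockExtensions h
    have hθG := (hM.fromBlocks₁₁ (toC B) (toC θ)).mp hF
    refine ⟨θ, .of_toC ?_, hCθ, hθG⟩
    simpa using hθG.add (hM.inv.posSemidef.conjTranspose_mul_mul_same (toC B))
  · rintro ⟨θ, hθ, hCθ, hθG⟩ k -
    exact ⟨θ, posSemidef_blockExtension (hθ.1.map _ fun _ => by simp) hCθ
      ((hM.fromBlocks₁₁ _ _).mpr hθG)⟩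

/-- Lemma 1: complete extendability criterion when `A + (i/2)J` and `C + (i/2)J` are
invertible. -/
theorem gaussian_complete_extendability_invertible_iff
    {m n : ℕ} (hm : 1 ≤ m) (hn : 1 ≤ n)
    (A : Matrix (Fin (2 * m)) (Fin (2 * m)) ℝ) (hA : A.IsSymm)
    (C : Matrix (Fin (2 * n)) (Fin (2 * n)) ℝ) (hC : C.IsSymm)
    (B : Matrix (Fin (2 * m)) (Fin (2 * n)) ℝ)
    (hS : (toC (Matrix.fromBlocks A B Bᵀ C) +
      (Complex.I / 2) • toC (Matrix.fromBlocks (Jmat m) 0 0 (Jmat n))).PosSemidef)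
    (hAinv : IsUnit (toC A + (Complex.I / 2) • toC (Jmat m)))
    (hCinv : IsUnit (toC C + (Complex.I / 2) • toC (Jmat n))) :
    (∀ k : ℕ, 1 ≤ k → ∃ θk : Matrix (Fin (2 * n)) (Fin (2 * n)) ℝ,
        (toC (Sext k A B C θk) + (Complex.I / 2) • toC (Jext m n k)).PosSemidef) ↔
      ∃ θ : Matrix (Fin (2 * n)) (Fin (2 * n)) ℝ, θ.PosSemidef ∧
        (toC C + (Complex.I / 2) • toC (Jmat n) - toC θ).PosSemidef ∧
        (toC θ -
          (toC B)ᵀ * (toC A + (Complex.I / 2) • toC (Jmat m))⁻¹ * toC B).PosSemidef :=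
  gaussian_complete_extendability_invertible_iff_general A C B hS hAinv
end
end

section
/- Let n, s ≥ 1, let A be a real symmetric 2n×2n matrix and B a real 2n×2s matrix such that the block matrix X = [[A, B],[Bᵀ, (1/2)I_{2s}]] satisfies X + (i/2)J_{2(n+s)} ≥ 0 (i.e., X is a Gaussian covariance matrix one of whose marginals is the pure-state covariance (1/2)I_{2s}). Then B = 0. -/
/-!
The lower-right block `½ I + (i/2) J_{2s}` of `X + (i/2) J` annihilates `e_{2k} + i e_{2k+1}` for
every mode `k`. Extended by zero, this vector is isotropic for the positive semidefinite matrix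
`X + (i/2) J`, hence lies in its kernel; reading off the upper rows gives
`B e_{2k} + i B e_{2k+1} = 0`, and since `B` is real both columns vanish.
-/

open Matrix Complex
open scoped Kronecker ComplexOrder

noncomputable section

namespace Matrix

theorem PosSemidef.mulVec_eq_zero_of_fromBlocks {𝕜 m n : Type*} [RCLike 𝕜] [Fintype m]
    [Fintype n] {P : Matrix m m 𝕜} {Q : Matrix m n 𝕜} {C : Matrix n m 𝕜} {R : Matrix n n 𝕜}
    (h : (fromBlocks P Q C R).PosSemidef) {y : n → 𝕜} (hy : R *ᵥ y = 0) : Q *ᵥ y = 0 := by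
  have hM : fromBlocks P Q C R *ᵥ Sum.elim 0 y = Sum.elim (Q *ᵥ y) 0 := by
    rw [fromBlocks_mulVec, Sum.elim_comp_inl, Sum.elim_comp_inr, mulVec_zero, mulVec_zero, hy,
      zero_add, add_zero]
  have hquad : star (Sum.elim 0 y) ⬝ᵥ fromBlocks P Q C R *ᵥ Sum.elim 0 y = 0 := by
    simp [hM, dotProduct, Fintype.sum_sum_type]
  have hker := (h.dotProduct_mulVec_zero_iff _).mp hquad
  rw [hM] at hker
  exact funext fun i => congrFun hker (Sum.inl i)

end Matrix

theorem toC_fromBlocks {l m n o : Type*} (A : Matrix n l ℝ) (B : Matrix n m ℝ)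
    (C : Matrix o l ℝ) (D : Matrix o m ℝ) :
    toC (fromBlocks A B C D) = fromBlocks (toC A) (toC B) (toC C) (toC D) :=
  fromBlocks_map ..

theorem Jmat_apply_two_mul {s k : ℕ} (hk : k < s) (w : Fin (2 * s)) :
    Jmat s w ⟨2 * k, by omega⟩ = if w.val = 2 * k + 1 then -1 else 0 := by
  simp only [Jmat]
  split_ifs <;> first | rfl | omega

theorem Jmat_apply_two_mul_add_one {s k : ℕ} (hk : k < s) (w : Fin (2 * s)) :
    Jmat s w ⟨2 * k + 1, by omega⟩ = if w.val = 2 * k then 1 else 0 := by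
  simp only [Jmat]
  split_ifs <;> first | rfl | omega

theorem half_one_add_I_half_Jmat_mulVec_eq_zero {s k : ℕ} (hk : k < s) :
    (toC ((1 / 2 : ℝ) • (1 : Matrix (Fin (2 * s)) (Fin (2 * s)) ℝ)) + (I / 2) • toC (Jmat s)) *ᵥ
      (Pi.single ⟨2 * k, by omega⟩ 1 + Pi.single ⟨2 * k + 1, by omega⟩ I) = 0 := by
  ext w
  simp only [toC, one_div, mulVec_add, mulVec_single, MulOpposite.op_one, one_smul,
    op_smul_eq_smul, Pi.add_apply, col_apply, Matrix.add_apply, map_apply, Matrix.smul_apply,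
    one_apply, Fin.ext_iff, smul_eq_mul, mul_ite, mul_one, mul_zero, Jmat_apply_two_mul hk,
    Pi.smul_apply, Jmat_apply_two_mul_add_one hk, Pi.zero_apply]
  split_ifs <;> first
    | omega
    | (push_cast; linear_combination (1 / 2 : ℂ) * I_sq)
    | (push_cast; ring)

theorem offdiag_block_eq_zero_of_pure_marginal_general
    {n s : ℕ}
    (A : Matrix (Fin (2 * n)) (Fin (2 * n)) ℝ)
    (B : Matrix (Fin (2 * n)) (Fin (2 * s)) ℝ)
    (hX : (toC (Matrix.fromBlocks A B Bᵀ ((1 / 2 : ℝ) • 1)) +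
      (Complex.I / 2) • toC (Matrix.fromBlocks (Jmat n) 0 0 (Jmat s))).PosSemidef) :
    B = 0 := by
  rw [toC_fromBlocks, toC_fromBlocks, fromBlocks_smul, fromBlocks_add] at hX
  ext i j
  have hmode {k : ℕ} (hk : k < s) :
      B i ⟨2 * k, by omega⟩ = 0 ∧ B i ⟨2 * k + 1, by omega⟩ = 0 := by
    have hker : (B i ⟨2 * k, by omega⟩ : ℂ) + I * B i ⟨2 * k + 1, by omega⟩ = 0 := by
      simpa [toC, mulVec_add] using congrFun
        (hX.mulVec_eq_zero_of_fromBlocks (half_one_add_I_half_Jmat_mulVec_eq_zero hk)) i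
    exact ⟨by simpa using congrArg re hker, by simpa using congrArg im hker⟩
  obtain ⟨k, hj | hj⟩ : ∃ k, j.val = 2 * k ∨ j.val = 2 * k + 1 := ⟨j.val / 2, by omega⟩
  · rw [show j = ⟨2 * k, by omega⟩ from Fin.ext hj]
    exact (hmode (by omega)).1
  · rw [show j = ⟨2 * k + 1, by omega⟩ from Fin.ext hj]
    exact (hmode (by omega)).2

/-- Proposition 1: if a Gaussian covariance matrix has a pure marginal `(1/2)I`, then the
off-diagonal block vanishes. -/
theorem offdiag_block_eq_zero_of_pure_marginal
    {n s : ℕ} (hn : 1 ≤ n) (hs : 1 ≤ s)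
    (A : Matrix (Fin (2 * n)) (Fin (2 * n)) ℝ) (hA : A.IsSymm)
    (B : Matrix (Fin (2 * n)) (Fin (2 * s)) ℝ)
    (hX : (toC (Matrix.fromBlocks A B Bᵀ ((1 / 2 : ℝ) • 1)) +
      (Complex.I / 2) • toC (Matrix.fromBlocks (Jmat n) 0 0 (Jmat s))).PosSemidef) :
    B = 0 :=
  offdiag_block_eq_zero_of_pure_marginal_general A B hX
end
end

section
/- Let E be a real symmetric positive semidefinite 2m×2m matrix, G a real symmetric 2n×2n matrix, F a real 2n×2m matrix such that the real block matrix [[E, Fᵀ],[F, G]] is positive semidefinite, and let φ be a real symmetric 2n×2n matrix. Then the k-extension S_k(E, Fᵀ, G, φ) is positive semidefinite (as a real symmetric matrix) for every integer k ≥ 1 if and only if G − φ is positive semidefinite and the real block matrix [[E, Fᵀ],[F, φ]] is positive semidefinite. (Equivalently, by Schur complements, if and only if G ≥ φ ≥ F E⁻ Fᵀ with (·)⁻ the Moore–Penrose inverse.) -/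
open Matrix Complex
open scoped Kronecker ComplexOrder

noncomputable section

/-!
Because `φ` is symmetric, `S_k(E, Fᵀ, G, φ)` is the pullback of `[[E, Fᵀ], [F, φ]]` along the map
forgetting the copy index, plus a copy of `G - φ` on each diagonal block of copies; this gives
sufficiency. Conversely, compressing `S_k` by the matrix that spreads each `2n`-coordinate over
the copies with weights `w` yields `[[E, s Fᵀ], [s F, s² φ + (∑ wₐ²) (G - φ)]]` with `s = ∑ wₐ`.
The weights `(1, -1)` on two copies isolate `2 (G - φ)`, and the uniform weights `1/k` give
`[[E, Fᵀ], [F, φ + (G - φ)/k]]`, which tends to `[[E, Fᵀ], [F, φ]]`; positive semidefinite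
matrices form a closed set.
-/

open Filter Topology

namespace Matrix

def weightedCopies (ι κ : Type*) {α : Type*} [DecidableEq ι] [DecidableEq κ] (w : α → ℝ) :
    Matrix (ι ⊕ α × κ) (ι ⊕ κ) ℝ :=
  fromBlocks 1 0 0 (of fun p j => if p.2 = j then w p.1 else 0)

variable {ι κ α : Type*}

lemma isClosed_setOf_posSemidef {𝕜 : Type*} [RCLike 𝕜] [Fintype ι] :
    IsClosed {M : Matrix ι ι 𝕜 | M.PosSemidef} := by
  simp_rw [posSemidef_iff_dotProduct_mulVec, Set.ofPred_and, Set.ofPred_forall]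
  exact (isClosed_eq (by fun_prop) continuous_id).inter
    (isClosed_iInter fun x => isClosed_le continuous_const (by fun_prop))

lemma PosSemidef.fromBlocks_zero_zero_zero_s6 {R : Type*} [Ring R] [PartialOrder R] [StarRing R]
    [Fintype ι] [Fintype κ] [DecidableEq ι] [DecidableEq κ] {X : Matrix κ κ R}
    (hX : X.PosSemidef) : (fromBlocks (0 : Matrix ι ι R) 0 0 X).PosSemidef := by
  have hconj : fromBlocks (0 : Matrix ι ι R) 0 0 X
      = (fromCols (0 : Matrix κ ι R) 1)ᴴ * X * fromCols (0 : Matrix κ ι R) 1 := by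
    ext (i | i) (j | j) <;> simp [mul_apply, one_apply, apply_ite star]
  exact hconj ▸ hX.conjTranspose_mul_mul_same _

variable [Fintype ι] [Fintype κ] [Fintype α] [DecidableEq ι] [DecidableEq κ]

lemma weightedCopies_transpose_mul_mul [DecidableEq α] (w : α → ℝ) (A : Matrix ι ι ℝ)
    (B : Matrix ι κ ℝ) (C : Matrix κ ι ℝ) (D X : Matrix κ κ ℝ) :
    (weightedCopies ι κ w)ᵀ *
        ((fromBlocks A B C D).submatrix (Sum.map id Prod.snd) (Sum.map id Prod.snd) +
          fromBlocks 0 0 0 ((1 : Matrix α α ℝ) ⊗ₖ X)) *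
        weightedCopies ι κ w =
      fromBlocks A ((∑ a, w a) • B) ((∑ a, w a) • C)
        ((∑ a, w a) ^ 2 • D + (∑ a, w a ^ 2) • X) := by
  ext (i | i) (j | j) <;>
    simp [weightedCopies, mul_apply, Fintype.sum_sum_type, Fintype.sum_prod_type, one_apply,
      Finset.sum_mul, Finset.mul_sum, sq, mul_add, add_mul, Finset.sum_add_distrib, ite_mul,
      mul_ite] <;>
    simp only [mul_comm, mul_left_comm]

end Matrix

variable {m n : ℕ}

lemma sext_eq_submatrix_add (k : ℕ) (E : Matrix (Fin (2 * m)) (Fin (2 * m)) ℝ)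
    (F : Matrix (Fin (2 * n)) (Fin (2 * m)) ℝ) (G : Matrix (Fin (2 * n)) (Fin (2 * n)) ℝ)
    {φ : Matrix (Fin (2 * n)) (Fin (2 * n)) ℝ} (hφ : φ.IsSymm) :
    Sext k E Fᵀ G φ =
      (fromBlocks E Fᵀ F φ).submatrix (Sum.map id Prod.snd) (Sum.map id Prod.snd) +
        fromBlocks 0 0 0 ((1 : Matrix (Fin k) (Fin k) ℝ) ⊗ₖ (G - φ)) := by
  ext (i | ⟨a, i⟩) (j | ⟨b, j⟩)
  · simp [Sext]
  · simp [Sext]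
  · simp [Sext]
  · rcases lt_trichotomy a b with hab | rfl | hab
    · simp [Sext, hab, hab.ne]
    · simp [Sext]
    · simp [Sext, hab.ne', hab.not_gt, hφ.apply i j]

lemma posSemidef_fromBlocks_of_posSemidef_sext {k : ℕ} (w : Fin k → ℝ)
    {E : Matrix (Fin (2 * m)) (Fin (2 * m)) ℝ} {F : Matrix (Fin (2 * n)) (Fin (2 * m)) ℝ}
    {G φ : Matrix (Fin (2 * n)) (Fin (2 * n)) ℝ} (hφ : φ.IsSymm)
    (h : (Sext k E Fᵀ G φ).PosSemidef) :
    (fromBlocks E ((∑ a, w a) • Fᵀ) ((∑ a, w a) • F)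
      ((∑ a, w a) ^ 2 • φ + (∑ a, w a ^ 2) • (G - φ))).PosSemidef := by
  simpa only [conjTranspose_eq_transpose_of_trivial, sext_eq_submatrix_add k E F G hφ,
    weightedCopies_transpose_mul_mul] using
    h.conjTranspose_mul_mul_same (weightedCopies (Fin (2 * m)) (Fin (2 * n)) w)

lemma posSemidef_sub_of_posSemidef_sext_two {E : Matrix (Fin (2 * m)) (Fin (2 * m)) ℝ}
    {F : Matrix (Fin (2 * n)) (Fin (2 * m)) ℝ} {G φ : Matrix (Fin (2 * n)) (Fin (2 * n)) ℝ}
    (hφ : φ.IsSymm) (h : (Sext 2 E Fᵀ G φ).PosSemidef) : (G - φ).PosSemidef := by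
  have h2 : ((∑ a, ![(1 : ℝ), -1] a) ^ 2 • φ +
      (∑ a, ![(1 : ℝ), -1] a ^ 2) • (G - φ)).PosSemidef :=
    (posSemidef_fromBlocks_of_posSemidef_sext ![1, -1] hφ h).submatrix Sum.inr
  norm_num [Fin.sum_univ_two] at h2
  simpa [smul_smul] using h2.smul (a := (2 : ℝ)⁻¹) (by norm_num)

lemma posSemidef_fromBlocks_add_inv_smul_of_posSemidef_sext {k : ℕ} (hk : k ≠ 0)
    {E : Matrix (Fin (2 * m)) (Fin (2 * m)) ℝ} {F : Matrix (Fin (2 * n)) (Fin (2 * m)) ℝ}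
    {G φ : Matrix (Fin (2 * n)) (Fin (2 * n)) ℝ} (hφ : φ.IsSymm)
    (h : (Sext k E Fᵀ G φ).PosSemidef) :
    (fromBlocks E Fᵀ F (φ + (k : ℝ)⁻¹ • (G - φ))).PosSemidef := by
  have hk0 : (k : ℝ) ≠ 0 := Nat.cast_ne_zero.mpr hk
  simpa [mul_inv_cancel₀ hk0, mul_inv_cancel_left₀ hk0, sq] using
    posSemidef_fromBlocks_of_posSemidef_sext (fun _ => (k : ℝ)⁻¹) hφ h

theorem real_Sext_posSemidef_forall_iff_general
    {m n : ℕ} (E : Matrix (Fin (2 * m)) (Fin (2 * m)) ℝ)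
    (G : Matrix (Fin (2 * n)) (Fin (2 * n)) ℝ)
    (F : Matrix (Fin (2 * n)) (Fin (2 * m)) ℝ)
    (φ : Matrix (Fin (2 * n)) (Fin (2 * n)) ℝ) (hφ : φ.IsSymm) :
    (∀ k : ℕ, 1 ≤ k → (Sext k E Fᵀ G φ).PosSemidef) ↔
      (G - φ).PosSemidef ∧ (Matrix.fromBlocks E Fᵀ F φ).PosSemidef := by
  constructor
  · intro h
    have hlim : Tendsto (fun k : ℕ => fromBlocks E Fᵀ F (φ + (k : ℝ)⁻¹ • (G - φ))) atTop
        (𝓝 (fromBlocks E Fᵀ F φ)) := by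
      have hcont : Continuous fun X => fromBlocks E Fᵀ F X :=
        continuous_const.matrix_fromBlocks continuous_const continuous_const continuous_id
      have hφlim : Tendsto (fun k : ℕ => φ + (k : ℝ)⁻¹ • (G - φ)) atTop (𝓝 φ) := by
        simpa using ((tendsto_inv_atTop_nhds_zero_nat (𝕜 := ℝ)).smul_const (G - φ)).const_add φ
      exact (hcont.tendsto φ).comp hφlim
    refine ⟨posSemidef_sub_of_posSemidef_sext_two hφ (h 2 one_le_two),
      isClosed_setOf_posSemidef.mem_of_tendsto hlim ?_⟩
    filter_upwards [eventually_ge_atTop 1] with k hk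
    exact posSemidef_fromBlocks_add_inv_smul_of_posSemidef_sext (by omega) hφ (h k hk)
  · rintro ⟨hGφ, hEFφ⟩ k -
    rw [sext_eq_submatrix_add k E F G hφ]
    exact (hEFφ.submatrix _).add (PosSemidef.one.kronecker hGφ).fromBlocks_zero_zero_zero_s6

/-- Real-matrix extension criterion used in Theorem 2: the `k`-extension
`S_k(E,Fᵀ,G,φ)` is positive semidefinite for every `k ≥ 1` iff `G - φ ≥ 0` and
`[[E,Fᵀ],[F,φ]] ≥ 0`. -/
theorem real_Sext_posSemidef_forall_iff
    {m n : ℕ} (E : Matrix (Fin (2 * m)) (Fin (2 * m)) ℝ) (hE : E.PosSemidef)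
    (G : Matrix (Fin (2 * n)) (Fin (2 * n)) ℝ) (hG : G.IsSymm)
    (F : Matrix (Fin (2 * n)) (Fin (2 * m)) ℝ)
    (hEFG : (Matrix.fromBlocks E Fᵀ F G).PosSemidef)
    (φ : Matrix (Fin (2 * n)) (Fin (2 * n)) ℝ) (hφ : φ.IsSymm) :
    (∀ k : ℕ, 1 ≤ k → (Sext k E Fᵀ G φ).PosSemidef) ↔
      (G - φ).PosSemidef ∧ (Matrix.fromBlocks E Fᵀ F φ).PosSemidef :=
  real_Sext_posSemidef_forall_iff_general E G F φ hφ
end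
end

section
/- Let m, n ≥ 1 and let S = [[A, B],[Bᵀ, C]] be a covariance matrix (A real symmetric 2m×2m, C real symmetric 2n×2n, B real 2m×2n, S + (i/2)J_{2(m+n)} ≥ 0). If S is separable, i.e., there exist real symmetric matrices X (2m×2m) and Y (2n×2n) with X + (i/2)J_{2m} ≥ 0, Y + (i/2)J_{2n} ≥ 0 and S − (X ⊕ Y) positive semidefinite as a real matrix, then there exists a single real symmetric positive semidefinite 2n×2n matrix θ such that for every integer k ≥ 1 the matrix S_k(A,B,C,θ) + (i/2)(J_{2m} ⊕ (I_k ⊗ J_{2n})) is positive semidefinite; in particular, S is completely extendable. -/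
open Matrix Complex
open scoped Kronecker ComplexOrder

noncomputable section

/-!
Take `θ = C - Y`, where `X ⊕ Y ≤ S` witnesses separability, and let `π` send every copy of the
second system onto the original one. Then `S_k = π^*(S - X ⊕ Y) + X ⊕ (I_k ⊗ Y)`: the block
between two distinct copies is `C - Y`, the `(2,2)`-block of `S - X ⊕ Y`. Hence
`S_k + (i/2) J' = π^*(S - X ⊕ Y) + (X + (i/2) J) ⊕ I_k ⊗ (Y + (i/2) J)`, a sum of two positive
semidefinite matrices.
-/

namespace Matrix

open scoped MatrixOrder

variable {𝕜 p q : Type*} [RCLike 𝕜] [Fintype p] [Fintype q]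

theorem PosSemidef.fromBlocks_zero {M : Matrix p p 𝕜} {N : Matrix q q 𝕜}
    (hM : M.PosSemidef) (hN : N.PosSemidef) : (fromBlocks M 0 0 N).PosSemidef := by
  classical
  obtain ⟨a, rfl⟩ := CStarAlgebra.nonneg_iff_eq_star_mul_self.mp hM.nonneg
  obtain ⟨b, rfl⟩ := CStarAlgebra.nonneg_iff_eq_star_mul_self.mp hN.nonneg
  simpa [fromBlocks_conjTranspose, fromBlocks_multiply, star_eq_conjTranspose] using
    posSemidef_conjTranspose_mul_self (fromBlocks a 0 0 b)

theorem PosSemidef.toC {M : Matrix p p ℝ} (hM : M.PosSemidef) : (toC M).PosSemidef := by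
  classical
  obtain ⟨a, rfl⟩ := CStarAlgebra.nonneg_iff_eq_star_mul_self.mp hM.nonneg
  have : _root_.toC (star a * a) = (_root_.toC a)ᴴ * _root_.toC a := by
    ext i j
    simp [_root_.toC, mul_apply, conjTranspose_apply]
  simpa [this] using posSemidef_conjTranspose_mul_self (_root_.toC a)

end Matrix

theorem toC_add {p q : Type*} (M N : Matrix p q ℝ) : toC (M + N) = toC M + toC N :=
  Matrix.map_add _ (fun _ _ => ofReal_add _ _) M N

theorem Sext_sub_eq_submatrix_add {m n k : ℕ} {A X : Matrix (Fin (2 * m)) (Fin (2 * m)) ℝ}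
    {B : Matrix (Fin (2 * m)) (Fin (2 * n)) ℝ} {C Y : Matrix (Fin (2 * n)) (Fin (2 * n)) ℝ}
    (hC : C.IsSymm) (hY : Y.IsSymm) :
    Sext k A B C (C - Y) =
      (fromBlocks A B Bᵀ C - fromBlocks X 0 0 Y).submatrix (Sum.map id Prod.snd)
        (Sum.map id Prod.snd) + fromBlocks X 0 0 ((1 : Matrix (Fin k) (Fin k) ℝ) ⊗ₖ Y) := by
  ext (i | ⟨a, i⟩) (j | ⟨b, j⟩)
  · simp [Sext]
  · simp [Sext]
  · simp [Sext]
  · rcases lt_trichotomy a b with hab | rfl | hab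
    · simp [Sext, hab, hab.ne]
    · simp [Sext]
    · simp [Sext, hab.ne', hab.not_gt, hC.apply i j, hY.apply i j]

theorem toC_fromBlocks_kronecker_add_smul {p q k : Type*} [DecidableEq k] (c : ℂ)
    (X J₁ : Matrix p p ℝ) (Y J₂ : Matrix q q ℝ) :
    toC (fromBlocks X 0 0 ((1 : Matrix k k ℝ) ⊗ₖ Y)) +
        c • toC (fromBlocks J₁ 0 0 ((1 : Matrix k k ℝ) ⊗ₖ J₂)) =
      fromBlocks (toC X + c • toC J₁) 0 0 ((1 : Matrix k k ℂ) ⊗ₖ (toC Y + c • toC J₂)) := by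
  ext (i | ⟨a, i⟩) (j | ⟨b, j⟩) <;> simp [toC, one_apply]
  split_ifs <;> simp

theorem separable_implies_completely_extendable_general
    {m n : ℕ}
    (A : Matrix (Fin (2 * m)) (Fin (2 * m)) ℝ)
    (C : Matrix (Fin (2 * n)) (Fin (2 * n)) ℝ) (hC : C.IsSymm)
    (B : Matrix (Fin (2 * m)) (Fin (2 * n)) ℝ)
    (hsep : ∃ (X : Matrix (Fin (2 * m)) (Fin (2 * m)) ℝ)
        (Y : Matrix (Fin (2 * n)) (Fin (2 * n)) ℝ), X.IsSymm ∧ Y.IsSymm ∧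
        (toC X + (Complex.I / 2) • toC (Jmat m)).PosSemidef ∧
        (toC Y + (Complex.I / 2) • toC (Jmat n)).PosSemidef ∧
        (Matrix.fromBlocks A B Bᵀ C - Matrix.fromBlocks X 0 0 Y).PosSemidef) :
    ∃ θ : Matrix (Fin (2 * n)) (Fin (2 * n)) ℝ, θ.PosSemidef ∧
      ∀ k : ℕ, 1 ≤ k →
        (toC (Sext k A B C θ) + (Complex.I / 2) • toC (Jext m n k)).PosSemidef := by
  obtain ⟨X, Y, -, hY, hXJ, hYJ, hP⟩ := hsep
  refine ⟨C - Y, by convert hP.submatrix Sum.inr; ext; simp, fun k _ => ?_⟩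
  rw [Sext_sub_eq_submatrix_add (X := X) hC hY, toC_add, add_assoc, Jext,
    toC_fromBlocks_kronecker_add_smul]
  exact (hP.submatrix _).toC.add (hXJ.fromBlocks_zero (PosSemidef.one.kronecker hYJ))

/-- Theorem 2: every separable Gaussian covariance matrix is completely extendable, with a
single real symmetric positive semidefinite extension matrix `θ` working for all `k`. -/
theorem separable_implies_completely_extendable
    {m n : ℕ} (hm : 1 ≤ m) (hn : 1 ≤ n)
    (A : Matrix (Fin (2 * m)) (Fin (2 * m)) ℝ) (hA : A.IsSymm)
    (C : Matrix (Fin (2 * n)) (Fin (2 * n)) ℝ) (hC : C.IsSymm)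
    (B : Matrix (Fin (2 * m)) (Fin (2 * n)) ℝ)
    (hS : (toC (Matrix.fromBlocks A B Bᵀ C) +
      (Complex.I / 2) • toC (Matrix.fromBlocks (Jmat m) 0 0 (Jmat n))).PosSemidef)
    (hsep : ∃ (X : Matrix (Fin (2 * m)) (Fin (2 * m)) ℝ)
        (Y : Matrix (Fin (2 * n)) (Fin (2 * n)) ℝ), X.IsSymm ∧ Y.IsSymm ∧
        (toC X + (Complex.I / 2) • toC (Jmat m)).PosSemidef ∧
        (toC Y + (Complex.I / 2) • toC (Jmat n)).PosSemidef ∧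
        (Matrix.fromBlocks A B Bᵀ C - Matrix.fromBlocks X 0 0 Y).PosSemidef) :
    ∃ θ : Matrix (Fin (2 * n)) (Fin (2 * n)) ℝ, θ.PosSemidef ∧
      ∀ k : ℕ, 1 ≤ k →
        (toC (Sext k A B C θ) + (Complex.I / 2) • toC (Jext m n k)).PosSemidef :=
  separable_implies_completely_extendable_general A C hC B hsep
end
end

section
/- Let m, n ≥ 1 and let S = [[A, B],[Bᵀ, C]] be a covariance matrix (A real symmetric 2m×2m, C real symmetric 2n×2n, B real 2m×2n, S + (i/2)J_{2(m+n)} ≥ 0). Suppose there exists a real symmetric positive semidefinite 2n×2n matrix θ such that C + (i/2)J_{2n} − θ is positive semidefinite and the complex block matrix [[A + (i/2)J_{2m}, B],[Bᵀ, θ]] is positive semidefinite (i.e., S is completely extendable). Then S is separable: there exist real symmetric matrices X (2m×2m) and Y (2n×2n) with X + (i/2)J_{2m} ≥ 0, Y + (i/2)J_{2n} ≥ 0 and S − (X ⊕ Y) positive semidefinite as a real matrix. (One may take Y = C − θ.) -/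
open Matrix Complex
open scoped Kronecker ComplexOrder

noncomputable section

/-! Take `Y = C - θ` and `X = A - B θ⁺ Bᵀ`, where `θ⁺` is a symmetric generalized inverse
of `θ` (`θ θ⁺ θ = θ`). Positivity of `[[A + (i/2)J, B], [Bᵀ, θ]]` forces `B θ⁺ θ = B`; with
this, `X + (i/2)J` is the generalized Schur complement of that block matrix, hence positive,
and `S - X ⊕ Y = [[B θ⁺ Bᵀ, B], [Bᵀ, θ]] = Wᵀ θ W` for `W = [θ⁺ Bᵀ | 1]`. -/

namespace Matrix

variable {𝕜 : Type*} [RCLike 𝕜] {l o : Type*} [Fintype l] [Fintype o]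
  {P : Matrix l l 𝕜} {Q : Matrix l o 𝕜} {R p : Matrix o o 𝕜}

lemma IsHermitian.exists_isHermitian_mul_mul_self [DecidableEq o] (hR : R.IsHermitian) :
    ∃ p : Matrix o o 𝕜, p.IsHermitian ∧ R * p * R = R := by
  refine ⟨cfc (·⁻¹ : ℝ → ℝ) R, cfc_predicate _ _, ?_⟩
  have hcont (f : ℝ → ℝ) : ContinuousOn f (spectrum ℝ R) := (Set.toFinite _).continuousOn f
  calc R * cfc (·⁻¹ : ℝ → ℝ) R * R = cfc (fun x : ℝ => x * x⁻¹ * x) R := by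
        rw [cfc_mul _ _ R (hcont _) (hcont _), cfc_mul _ _ R (hcont _) (hcont _), cfc_id' ℝ R]
    _ = R := by simp only [mul_inv_mul_cancel, cfc_id' ℝ R]

lemma PosSemidef.mul_mul_eq_of_fromBlocks (h : (fromBlocks P Q Qᴴ R).PosSemidef)
    (hp : R * p * R = R) : Q * p * R = Q := by
  classical
  -- Writing the block matrix as `Nᴴ * N` gives `R = N₂ᴴ N₂` and `Q = N₁ᴴ N₂`,
  -- so `ker R = ker N₂ ⊆ ker Q`.
  open scoped MatrixOrder in
  obtain ⟨N, hN⟩ := CStarAlgebra.nonneg_iff_eq_star_mul_self.mp h.nonneg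
  rw [← fromCols_toCols N, star_eq_conjTranspose,
    conjTranspose_fromCols_eq_fromRows_conjTranspose, fromRows_mul_fromCols] at hN
  obtain ⟨-, hQ, -, hR⟩ := fromBlocks_inj.mp hN
  have hN₂ : N.toCols₂ * (1 - p * R) = 0 := by
    rw [← conjTranspose_mul_self_mul_eq_zero, ← hR, Matrix.mul_sub, Matrix.mul_one,
      ← Matrix.mul_assoc, hp, sub_self]
  have hQ₀ : Q * (1 - p * R) = 0 := by rw [hQ, Matrix.mul_assoc, hN₂, Matrix.mul_zero]
  rwa [Matrix.mul_sub, Matrix.mul_one, sub_eq_zero, eq_comm, ← Matrix.mul_assoc] at hQ₀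

lemma PosSemidef.sub_mul_mul_conjTranspose_of_fromBlocks [DecidableEq l] [DecidableEq o]
    (h : (fromBlocks P Q Qᴴ R).PosSemidef) (hp : p.IsHermitian) (hQ : Q * p * R = Q) :
    (P - Q * p * Qᴴ).PosSemidef := by
  convert h.conjTranspose_mul_mul_same (fromRows 1 (-(p * Qᴴ))) using 1
  rw [conjTranspose_fromRows_eq_fromCols_conjTranspose, fromCols_mul_fromBlocks,
    fromCols_mul_fromRows]
  simp only [conjTranspose_one, conjTranspose_neg, conjTranspose_mul, conjTranspose_conjTranspose,
    hp.eq, Matrix.one_mul, Matrix.mul_one, Matrix.neg_mul, Matrix.mul_neg, ← Matrix.mul_assoc, hQ,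
    add_neg_cancel, Matrix.zero_mul, neg_zero, add_zero, sub_eq_add_neg]

lemma PosSemidef.fromBlocks_of_mul_mul_eq [DecidableEq o] (hR : R.PosSemidef)
    (hp : p.IsHermitian) (hQ : Q * p * R = Q) :
    (fromBlocks (Q * p * Qᴴ) Q Qᴴ R).PosSemidef := by
  have hQ' : R * p * Qᴴ = Qᴴ := by
    simpa only [conjTranspose_mul, hR.isHermitian.eq, hp.eq, Matrix.mul_assoc] using
      congrArg (·ᴴ) hQ
  convert hR.conjTranspose_mul_mul_same (fromCols (p * Qᴴ) (1 : Matrix o o 𝕜)) using 1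
  rw [conjTranspose_fromCols_eq_fromRows_conjTranspose, fromRows_mul, fromRows_mul_fromCols]
  simp only [conjTranspose_one, conjTranspose_mul, conjTranspose_conjTranspose, hp.eq,
    Matrix.one_mul, Matrix.mul_one, ← Matrix.mul_assoc, hQ, hQ']

end Matrix

section toC

variable {p q r : Type*}

lemma toC_injective : Function.Injective (toC : Matrix p q ℝ → Matrix p q ℂ) :=
  Matrix.map_injective Complex.ofReal_injective

lemma toC_mul [Fintype q] (M : Matrix p q ℝ) (N : Matrix q r ℝ) : toC (M * N) = toC M * toC N :=
  Matrix.map_mul (f := Complex.ofRealHom)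

lemma toC_sub (M N : Matrix p q ℝ) : toC (M - N) = toC M - toC N :=
  Matrix.map_sub _ (map_sub Complex.ofRealHom) M N

lemma toC_transpose (M : Matrix p q ℝ) : toC Mᵀ = (toC M)ᵀ :=
  Matrix.transpose_map

lemma conjTranspose_toC (M : Matrix p q ℝ) : (toC M)ᴴ = toC Mᵀ := by
  rw [← conjTranspose_eq_transpose_of_trivial, toC, toC, conjTranspose_map _ fun _ => by simp]

lemma Matrix.IsHermitian.toC {M : Matrix p p ℝ} (h : M.IsHermitian) : (toC M).IsHermitian :=
  h.map _ fun _ => by simp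

end toC

theorem completely_extendable_implies_separable_general
    {m n : ℕ}
    (A : Matrix (Fin (2 * m)) (Fin (2 * m)) ℝ) (hA : A.IsSymm)
    (C : Matrix (Fin (2 * n)) (Fin (2 * n)) ℝ) (hC : C.IsSymm)
    (B : Matrix (Fin (2 * m)) (Fin (2 * n)) ℝ)
    (hext : ∃ θ : Matrix (Fin (2 * n)) (Fin (2 * n)) ℝ, θ.PosSemidef ∧
      (toC C + (Complex.I / 2) • toC (Jmat n) - toC θ).PosSemidef ∧
      (Matrix.fromBlocks (toC A + (Complex.I / 2) • toC (Jmat m)) (toC B)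
        (toC B)ᵀ (toC θ)).PosSemidef) :
    ∃ (X : Matrix (Fin (2 * m)) (Fin (2 * m)) ℝ)
      (Y : Matrix (Fin (2 * n)) (Fin (2 * n)) ℝ), X.IsSymm ∧ Y.IsSymm ∧
      (toC X + (Complex.I / 2) • toC (Jmat m)).PosSemidef ∧
      (toC Y + (Complex.I / 2) • toC (Jmat n)).PosSemidef ∧
      (Matrix.fromBlocks A B Bᵀ C - Matrix.fromBlocks X 0 0 Y).PosSemidef := by
  obtain ⟨θ, hθ, hCθ, hM⟩ := hext
  rw [← toC_transpose, ← conjTranspose_toC] at hM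
  obtain ⟨p, hp, hθpθ⟩ := hθ.isHermitian.exists_isHermitian_mul_mul_self
  have hBpθ : B * p * θ = B := toC_injective <| by
    simpa only [toC_mul] using
      hM.mul_mul_eq_of_fromBlocks (by rw [← toC_mul, ← toC_mul, hθpθ])
  refine ⟨A - B * p * Bᵀ, C - θ, ?_, hC.sub (isHermitian_iff_isSymm.mp hθ.isHermitian),
    ?_, ?_, ?_⟩
  · simp only [IsSymm, transpose_sub, transpose_mul, transpose_transpose, hA.eq,
      (isHermitian_iff_isSymm.mp hp).eq, Matrix.mul_assoc]
  · have hSchur : toC (A - B * p * Bᵀ) + (Complex.I / 2) • toC (Jmat m) =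
        toC A + (Complex.I / 2) • toC (Jmat m) - toC B * toC p * (toC B)ᴴ := by
      rw [conjTranspose_toC, toC_sub, toC_mul, toC_mul]
      abel
    rw [hSchur]
    exact hM.sub_mul_mul_conjTranspose_of_fromBlocks hp.toC
      (by rw [← toC_mul, ← toC_mul, hBpθ])
  · simpa only [toC_sub, sub_add_eq_add_sub] using hCθ
  · have hblocks : Matrix.fromBlocks A B Bᵀ C - Matrix.fromBlocks (A - B * p * Bᵀ) 0 0 (C - θ)
        = Matrix.fromBlocks (B * p * Bᴴ) B Bᴴ θ := by
      ext (i | i) (j | j) <;> simp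
    rw [hblocks]
    exact hθ.fromBlocks_of_mul_mul_eq hp hBpθ

/-- Theorem 3: every completely extendable Gaussian covariance matrix is separable (in the
sense of Werner--Wolf). -/
theorem completely_extendable_implies_separable
    {m n : ℕ} (hm : 1 ≤ m) (hn : 1 ≤ n)
    (A : Matrix (Fin (2 * m)) (Fin (2 * m)) ℝ) (hA : A.IsSymm)
    (C : Matrix (Fin (2 * n)) (Fin (2 * n)) ℝ) (hC : C.IsSymm)
    (B : Matrix (Fin (2 * m)) (Fin (2 * n)) ℝ)
    (hS : (toC (Matrix.fromBlocks A B Bᵀ C) +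
      (Complex.I / 2) • toC (Matrix.fromBlocks (Jmat m) 0 0 (Jmat n))).PosSemidef)
    (hext : ∃ θ : Matrix (Fin (2 * n)) (Fin (2 * n)) ℝ, θ.PosSemidef ∧
      (toC C + (Complex.I / 2) • toC (Jmat n) - toC θ).PosSemidef ∧
      (Matrix.fromBlocks (toC A + (Complex.I / 2) • toC (Jmat m)) (toC B)
        (toC B)ᵀ (toC θ)).PosSemidef) :
    ∃ (X : Matrix (Fin (2 * m)) (Fin (2 * m)) ℝ)
      (Y : Matrix (Fin (2 * n)) (Fin (2 * n)) ℝ), X.IsSymm ∧ Y.IsSymm ∧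
      (toC X + (Complex.I / 2) • toC (Jmat m)).PosSemidef ∧
      (toC Y + (Complex.I / 2) • toC (Jmat n)).PosSemidef ∧
      (Matrix.fromBlocks A B Bᵀ C - Matrix.fromBlocks X 0 0 Y).PosSemidef :=
  completely_extendable_implies_separable_general A hA C hC B hext
end
end

section
/- Let (Ω, 𝓕) be a measurable space, μ a finite (nonnegative) measure on Ω, d ≥ 1, and for each pair i, j ∈ Fin d let ν_{ij} be a complex measure on Ω that is absolutely continuous with respect to μ, such that for every measurable set F the d×d complex matrix (ν_{ij}(F))_{i,j} is positive semidefinite. Then, for μ-almost every ω ∈ Ω, the d×d matrix of Radon–Nikodym derivatives ((dν_{ij}/dμ)(ω))_{i,j} is positive semidefinite. If in addition Σ_i ν_{ii} = μ, then for μ-almost every ω the matrix ((dν_{ij}/dμ)(ω))_{i,j} has trace 1, i.e., it is a density matrix. -/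
open Matrix MeasureTheory
open scoped ComplexOrder

/-! For a fixed vector `x`, the function `ω ↦ x† (dν/dμ)(ω) x` has set integrals
`x† (ν(F)) x ≥ 0`, so it is `μ`-a.e. nonnegative. Intersecting these full-measure sets over a
countable dense set of vectors and using continuity of the quadratic form gives a nonnegative
quadratic form a.e., which over `ℂ` already forces the matrix to be Hermitian (polarization).
Likewise the trace of `dν/dμ` has the same set integrals as the constant `1`. -/

namespace Matrix

variable {n : Type*} [Fintype n]

theorem posSemidef_iff_forall_dotProduct_mulVec_nonneg [DecidableEq n] {M : Matrix n n ℂ} :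
    M.PosSemidef ↔ ∀ x, 0 ≤ star x ⬝ᵥ (M *ᵥ x) := by
  rw [← isPositive_toEuclideanLin_iff, LinearMap.isPositive_iff_complex]
  refine (WithLp.equiv 2 (n → ℂ)).forall_congr_left.trans (forall_congr' fun x => ?_)
  simp only [EuclideanSpace.inner_eq_star_dotProduct, toLpLin_apply, RCLike.re_to_complex,
    WithLp.equiv_symm_apply]
  rw [← star_star x, star_dotProduct_star, star_star, dotProduct_comm]
  generalize star x ⬝ᵥ M *ᵥ x = z
  simp [Complex.nonneg_iff, Complex.ext_iff, and_comm, eq_comm]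

theorem posSemidef_of_dense_dotProduct_mulVec_nonneg {M : Matrix n n ℂ} {s : Set (n → ℂ)}
    (hs : Dense s) (h : ∀ x ∈ s, 0 ≤ star x ⬝ᵥ (M *ᵥ x)) : M.PosSemidef := by
  classical
  have hcont : Continuous fun x : n → ℂ => star x ⬝ᵥ (M *ᵥ x) := by fun_prop
  refine posSemidef_iff_forall_dotProduct_mulVec_nonneg.2 fun x => ?_
  exact (isClosed_Ici.preimage hcont).closure_subset_iff.2 h (hs x)

end Matrix

namespace MeasureTheory

variable {Ω : Type*} [MeasurableSpace Ω] {μ : Measure Ω}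

theorem ComplexMeasure.setIntegral_rnDeriv [SigmaFinite μ] {c : ComplexMeasure Ω}
    (hc : c ≪ᵥ μ.toENNRealVectorMeasure) {F : Set Ω} (hF : MeasurableSet F) :
    ∫ x in F, c.rnDeriv μ x ∂μ = c F := by
  obtain ⟨hre, him⟩ := (c.absolutelyContinuous_ennreal_iff _).mp hc
  have hint := (c.integrable_rnDeriv μ).integrableOn (s := F)
  have hre_F := congrArg (· F) (SignedMeasure.withDensityᵥ_rnDeriv_eq _ μ hre)
  have him_F := congrArg (· F) (SignedMeasure.withDensityᵥ_rnDeriv_eq _ μ him)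
  simp only [withDensityᵥ_apply (SignedMeasure.integrable_rnDeriv _ _) hF] at hre_F him_F
  apply Complex.ext
  · rw [← RCLike.re_eq_complex_re, ← integral_re hint]
    exact hre_F
  · rw [← RCLike.im_eq_complex_im, ← integral_im hint]
    exact him_F

theorem _root_.Complex.ae_nonneg_of_forall_setIntegral_nonneg {g : Ω → ℂ} (hg : Integrable g μ)
    (h : ∀ F, MeasurableSet F → 0 ≤ ∫ x in F, g x ∂μ) : ∀ᵐ ω ∂μ, 0 ≤ g ω := by
  have hre : 0 ≤ᵐ[μ] fun ω => (g ω).re :=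
    MeasureTheory.ae_nonneg_of_forall_setIntegral_nonneg hg.re fun F hF _ =>
      (integral_re hg.integrableOn).symm ▸ (Complex.nonneg_iff.1 (h F hF)).1
  have him : (fun ω => (g ω).im) =ᵐ[μ] 0 :=
    hg.im.ae_eq_zero_of_forall_setIntegral_eq_zero fun F hF _ =>
      (integral_im hg.integrableOn).symm ▸ (Complex.nonneg_iff.1 (h F hF)).2.symm
  filter_upwards [hre, him] with ω hω_re hω_im
  exact Complex.nonneg_iff.2 ⟨hω_re, hω_im.symm⟩

variable {𝕜 n : Type*} [RCLike 𝕜] [Fintype n]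

theorem integrable_dotProduct_mulVec {f : n → n → Ω → 𝕜} (hf : ∀ i j, Integrable (f i j) μ)
    (x : n → 𝕜) : Integrable (fun ω => star x ⬝ᵥ (of (fun i j => f i j ω) *ᵥ x)) μ := by
  simp only [dotProduct, mulVec, of_apply]
  exact integrable_finsetSum _ fun i _ =>
    (integrable_finsetSum _ fun j _ => (hf i j).mul_const (x j)).const_mul _

theorem integral_dotProduct_mulVec {f : n → n → Ω → 𝕜} (hf : ∀ i j, Integrable (f i j) μ)
    (x : n → 𝕜) :
    ∫ ω, star x ⬝ᵥ (of (fun i j => f i j ω) *ᵥ x) ∂μ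
      = star x ⬝ᵥ (of (fun i j => ∫ ω, f i j ω ∂μ) *ᵥ x) := by
  simp only [dotProduct, mulVec, of_apply]
  rw [integral_finsetSum _ fun i _ =>
    (integrable_finsetSum _ fun j _ => (hf i j).mul_const (x j)).const_mul _]
  refine Finset.sum_congr rfl fun i _ => ?_
  rw [integral_const_mul, integral_finsetSum _ fun j _ => (hf i j).mul_const (x j)]
  simp only [integral_mul_const]

end MeasureTheory

theorem rnDeriv_matrix_posSemidef_ae_general {Ω : Type*} [MeasurableSpace Ω]
    (μ : Measure Ω) [IsFiniteMeasure μ] {d : ℕ}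
    (ν : Fin d → Fin d → ComplexMeasure Ω)
    (hac : ∀ i j, ν i j ≪ᵥ μ.toENNRealVectorMeasure)
    (hpos : ∀ F : Set Ω, MeasurableSet F →
      (Matrix.of fun i j => ν i j F).PosSemidef) :
    (∀ᵐ ω ∂μ, (Matrix.of fun i j => (ν i j).rnDeriv μ ω).PosSemidef) ∧
      ((∀ F : Set Ω, MeasurableSet F → ∑ i, ν i i F = ((μ F).toReal : ℂ)) →
        ∀ᵐ ω ∂μ, (Matrix.of fun i j => (ν i j).rnDeriv μ ω).trace = 1) := by
  have hint i j : Integrable ((ν i j).rnDeriv μ) μ := (ν i j).integrable_rnDeriv μ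
  have hset i j F (hF : MeasurableSet F) : ∫ x in F, (ν i j).rnDeriv μ x ∂μ = ν i j F :=
    ComplexMeasure.setIntegral_rnDeriv (hac i j) hF
  refine ⟨?_, fun htr => ?_⟩
  · have hquad x : ∀ᵐ ω ∂μ, 0 ≤ star x ⬝ᵥ (of (fun i j => (ν i j).rnDeriv μ ω) *ᵥ x) :=
      Complex.ae_nonneg_of_forall_setIntegral_nonneg (integrable_dotProduct_mulVec hint x)
        fun F hF => by
          rw [integral_dotProduct_mulVec (fun i j => (hint i j).restrict) x]
          simpa only [hset _ _ F hF] using (hpos F hF).dotProduct_mulVec_nonneg x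
    obtain ⟨s, hs_count, hs_dense⟩ := TopologicalSpace.exists_countable_dense (Fin d → ℂ)
    filter_upwards [(ae_ball_iff hs_count).2 fun x _ => hquad x] with ω hω
    exact posSemidef_of_dense_dotProduct_mulVec_nonneg hs_dense hω
  · have htrace : (fun ω => ∑ i, (ν i i).rnDeriv μ ω) =ᵐ[μ] 1 :=
      (integrable_finsetSum _ fun i _ => hint i i).ae_eq_of_forall_setIntegral_eq _ _
        (integrable_const 1) fun F hF _ => by
          rw [integral_finsetSum _ fun i _ => (hint i i).integrableOn]
          simp [hset _ _ F hF, htr F hF, measureReal_def]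
    filter_upwards [htrace] with ω hω
    simpa [Matrix.trace] using hω

/-- If a matrix of complex measures `ν i j ≪ μ` is positive semidefinite on every
measurable set, then the matrix of Radon--Nikodym derivatives is positive semidefinite
`μ`-a.e.; if moreover `Σ_i ν i i = μ`, then this matrix has trace `1` `μ`-a.e., i.e. it is
a density matrix. -/
theorem rnDeriv_matrix_posSemidef_ae {Ω : Type*} [MeasurableSpace Ω]
    (μ : Measure Ω) [IsFiniteMeasure μ] {d : ℕ} (hd : 1 ≤ d)
    (ν : Fin d → Fin d → ComplexMeasure Ω)
    (hac : ∀ i j, ν i j ≪ᵥ μ.toENNRealVectorMeasure)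
    (hpos : ∀ F : Set Ω, MeasurableSet F →
      (Matrix.of fun i j => ν i j F).PosSemidef) :
    (∀ᵐ ω ∂μ, (Matrix.of fun i j => (ν i j).rnDeriv μ ω).PosSemidef) ∧
      ((∀ F : Set Ω, MeasurableSet F → ∑ i, ν i i F = ((μ F).toReal : ℂ)) →
        ∀ᵐ ω ∂μ, (Matrix.of fun i j => (ν i j).rnDeriv μ ω).trace = 1) :=
  rnDeriv_matrix_posSemidef_ae_general μ ν hac hpos
end
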